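/- Suppose conditions (C) hold: γ(S,σ) + 2ξ(S)·η(σ) < 1 and ξ(S) − η(σ) ≤ 1. If ξ(S) > 0, then for every r with r̲ < r < r̄, every u in the closure of D(r) has all components nonzero and F(u) ∈ D(r); that is, F maps the closure of D(r) into D(r). If ξ(S) = 0, the same conclusion holds for every r > 0. -/

import Mathlib

open Complex

/-- `η_i(σ) := Σ_j Z̃_{ij} · conj(σ_j)` -/
noncomputable def etaI {n : ℕ} (Z : Matrix (Fin n) (Fin n) ℂ) (σ : Fin n → ℂ) (i : Fin n) : ℂ :=
  ∑ j, Z i j * (starRingEnd ℂ) (σ j)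

/-- `ξ_i(S) := Σ_j |Z̃_{ij} · S_j|` -/
noncomputable def xiI {n : ℕ} (Z : Matrix (Fin n) (Fin n) ℂ) (S : Fin n → ℂ) (i : Fin n) : ℝ :=
  ∑ j, ‖Z i j * S j‖

/-- `γ_i(S,σ) := 2(ξ_i(S) + Re η_i(σ)) − ξ_i(S)² − |η_i(σ)|²` -/
noncomputable def gammaI {n : ℕ} (Z : Matrix (Fin n) (Fin n) ℂ) (S σ : Fin n → ℂ)
    (i : Fin n) : ℝ :=
  2 * (xiI Z S i + (etaI Z σ i).re) - (xiI Z S i) ^ 2 - ‖etaI Z σ i‖ ^ 2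

/-- `η(σ) := max_i |η_i(σ)|` -/
noncomputable def etaMax {n : ℕ} (Z : Matrix (Fin n) (Fin n) ℂ) (σ : Fin n → ℂ) : ℝ :=
  ⨆ i, ‖etaI Z σ i‖

/-- `ξ(S) := max_i ξ_i(S)` -/
noncomputable def xiMax {n : ℕ} (Z : Matrix (Fin n) (Fin n) ℂ) (S : Fin n → ℂ) : ℝ :=
  ⨆ i, xiI Z S i

/-- `γ(S,σ) := max_i γ_i(S,σ)` -/
noncomputable def gammaMax {n : ℕ} (Z : Matrix (Fin n) (Fin n) ℂ) (S σ : Fin n → ℂ) : ℝ :=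
  ⨆ i, gammaI Z S σ i

/-- `r̲ := sqrt((1−γ − √Δ)/(2ξ(S)²))` where `Δ = (1−γ)² − 4ξ(S)²η(σ)²` -/
noncomputable def rLow {n : ℕ} (Z : Matrix (Fin n) (Fin n) ℂ) (S σ : Fin n → ℂ) : ℝ :=
  Real.sqrt ((1 - gammaMax Z S σ -
      Real.sqrt ((1 - gammaMax Z S σ) ^ 2 - 4 * (xiMax Z S) ^ 2 * (etaMax Z σ) ^ 2)) /
    (2 * (xiMax Z S) ^ 2))

/-- `r̄ := sqrt((1−γ + √Δ)/(2ξ(S)²))` where `Δ = (1−γ)² − 4ξ(S)²η(σ)²` -/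
noncomputable def rHigh {n : ℕ} (Z : Matrix (Fin n) (Fin n) ℂ) (S σ : Fin n → ℂ) : ℝ :=
  Real.sqrt ((1 - gammaMax Z S σ +
      Real.sqrt ((1 - gammaMax Z S σ) ^ 2 - 4 * (xiMax Z S) ^ 2 * (etaMax Z σ) ^ 2)) /
    (2 * (xiMax Z S) ^ 2))

/-- the fixed point power flow map
`F(u)_i := 1 − Σ_j Z̃_{ij}·conj(σ_j) + Σ_j Z̃_{ij}·(1 − 1/conj(u_j))·conj(S_j)` -/
noncomputable def pfMap {n : ℕ} (Z : Matrix (Fin n) (Fin n) ℂ) (S σ : Fin n → ℂ)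
    (u : Fin n → ℂ) : Fin n → ℂ :=
  fun i => 1 - ∑ j, Z i j * (starRingEnd ℂ) (σ j)
    + ∑ j, Z i j * (1 - 1 / (starRingEnd ℂ) (u j)) * (starRingEnd ℂ) (S j)

/-- `D(r) := {u : |1 − η_i(σ) − u_i| < r·ξ_i(S)` whenever `ξ_i(S) > 0`, and
`u_i = 1 − η_i(σ)` whenever `ξ_i(S) = 0}` -/
noncomputable def Dset {n : ℕ} (Z : Matrix (Fin n) (Fin n) ℂ) (S σ : Fin n → ℂ)
    (r : ℝ) : Set (Fin n → ℂ) :=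
  {u | ∀ i, (0 < xiI Z S i → ‖1 - etaI Z σ i - u i‖ < r * xiI Z S i) ∧
            (xiI Z S i = 0 → u i = 1 - etaI Z σ i)}

/-!
Every `u` in the closure of `D(r)` has each coordinate `u_j` in the closed disc of centre
`1 - η_j(σ)` and radius `r ξ_j(S)`. Writing the condition `r̲ < r < r̄` as
`ξ² r⁴ - (1 - γ) r² + η² < 0`, conditions (C) place that disc inside the Apollonius region
`|1 - u| < r |u|`, i.e. `|1 - 1/ū_j| < r`. Since
`1 - η_i(σ) - F(u)_i = -Σ_j Z̃_ij (1 - 1/ū_j) S̄_j`, the triangle inequality then gives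
`|1 - η_i(σ) - F(u)_i| < r ξ_i(S)`. When `ξ(S) = 0`, `D(r)` is the single point `1 - η(σ)`,
whose coordinates are nonzero because `γ(S,σ) < 1`.
-/

open ComplexConjugate

def quartic (ξ η γ r : ℝ) : ℝ := ξ ^ 2 * r ^ 4 - (1 - γ) * r ^ 2 + η ^ 2

lemma quadratic_neg_between_roots {a b c y : ℝ} (ha : 0 < a)
    (h₁ : (b - √(b ^ 2 - 4 * a * c)) / (2 * a) < y)
    (h₂ : y < (b + √(b ^ 2 - 4 * a * c)) / (2 * a)) :
    a * y ^ 2 - b * y + c < 0 := by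
  rw [div_lt_iff₀ (by positivity)] at h₁
  rw [lt_div_iff₀ (by positivity)] at h₂
  have h : |2 * a * y - b| < √(b ^ 2 - 4 * a * c) := abs_lt.mpr ⟨by linarith, by linarith⟩
  rw [Real.lt_sqrt (abs_nonneg _), sq_abs] at h
  nlinarith

lemma quartic_mono {x ξ m η γ' γ r : ℝ} (hx : 0 ≤ x) (hxξ : x ≤ ξ) (hm : 0 ≤ m) (hmη : m ≤ η)
    (hγ : γ' ≤ γ) : quartic x m γ' r ≤ quartic ξ η γ r := by
  unfold quartic
  gcongr

/-- If `x (1 - r²) ≥ 1`, then `y = x - 1 ≥ r² / (1 - r²)` and `η ≥ y`; on that range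
`quartic ξ η γ r ≥ (1 - r²) η² - 2 r² η + x² r⁴ - r² y² ≥ ((1 - r²) y - r²)²`. -/
lemma mul_one_sub_sq_lt_one {x ξ η γ r : ℝ} (hr : 0 < r) (hr1 : r ^ 2 < 1) (hx : 0 ≤ x)
    (hxξ : x ≤ ξ) (hξη : ξ - η ≤ 1) (hγ : 2 * x - x ^ 2 - 2 * η - η ^ 2 ≤ γ)
    (hq : quartic ξ η γ r < 0) : x * (1 - r ^ 2) < 1 := by
  set s := r ^ 2 with hs
  have hs0 : 0 < s := by positivity
  have hq' : ξ ^ 2 * s ^ 2 - (1 - γ) * s + η ^ 2 < 0 := by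
    simpa [quartic, hs, ← pow_mul] using hq
  by_contra! hxt
  set y := x - 1
  have hy : s ≤ (1 - s) * y := by linarith
  have hyη : y ≤ η := by linarith
  have hmono : (1 - s) * y ^ 2 - 2 * s * y ≤ (1 - s) * η ^ 2 - 2 * s * η := by
    nlinarith [mul_nonneg (sub_nonneg.2 hyη) (by nlinarith : 0 ≤ (1 - s) * (η + y) - 2 * s)]
  have hsq : (1 - s) * y ^ 2 - 2 * s * y + x ^ 2 * s ^ 2 - s * y ^ 2 = ((1 - s) * y - s) ^ 2 := by
    ring
  nlinarith [sq_nonneg ((1 - s) * y - s), mul_le_mul_of_nonneg_right hγ hs0.le,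
    mul_le_mul_of_nonneg_right (pow_le_pow_left₀ hx hxξ 2) (sq_nonneg s)]

lemma sq_norm_one_sub_sub_mul_sq_norm (r : ℝ) (v : ℂ) :
    ‖1 - v‖ ^ 2 - r ^ 2 * ‖v‖ ^ 2 = (1 - r ^ 2) * ‖v‖ ^ 2 - 2 * v.re + 1 := by
  simp only [Complex.sq_norm, normSq_apply, sub_re, sub_im, one_re, one_im]
  ring

lemma sq_norm_ofReal_mul_sub_one (t : ℝ) (v : ℂ) :
    ‖(t : ℂ) * v - 1‖ ^ 2 = t ^ 2 * ‖v‖ ^ 2 - 2 * t * v.re + 1 := by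
  simp only [Complex.sq_norm, normSq_apply, sub_re, sub_im, one_re, one_im, re_ofReal_mul,
    im_ofReal_mul]
  ring

/-- With `t = 1 - r²`, the region `‖1 - u‖ < r ‖u‖` is the disc `‖t u - 1‖ < r` when `t > 0`,
the complement of the closed disc `‖t u - 1‖ ≤ r` when `t < 0`, and the half-plane
`re u > 1/2` when `t = 0`. The closed disc of centre `1 - e` and radius `r x` fits in it because
`‖t (1 - e) - 1‖² - (r (1 - x t))²` is `t` times the quartic in `hq`, so has the sign of `-t`. -/
lemma norm_one_sub_lt_of_norm_sub_le {r x : ℝ} {e u : ℂ} (hr : 0 < r)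
    (hq : quartic x ‖e‖ (2 * (x + e.re) - x ^ 2 - ‖e‖ ^ 2) r < 0)
    (hxt : r ^ 2 < 1 → x * (1 - r ^ 2) < 1) (hu : ‖1 - e - u‖ ≤ r * x) :
    ‖1 - u‖ < r * ‖u‖ := by
  set t := 1 - r ^ 2 with ht
  suffices hf : ‖1 - u‖ ^ 2 - r ^ 2 * ‖u‖ ^ 2 < 0 from
    lt_of_pow_lt_pow_left₀ 2 (by positivity) (by linarith [mul_pow r ‖u‖ 2])
  have hfu := sq_norm_one_sub_sub_mul_sq_norm r u
  have htu := sq_norm_ofReal_mul_sub_one t u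
  have hce : ‖(t : ℂ) * (1 - e) - 1‖ ^ 2 = r ^ 2 * (1 - x * t) ^ 2
      + t * quartic x ‖e‖ (2 * (x + e.re) - x ^ 2 - ‖e‖ ^ 2) r := by
    have he := sq_norm_one_sub_sub_mul_sq_norm 0 e
    rw [sq_norm_ofReal_mul_sub_one, quartic, sub_re, one_re]
    linear_combination t ^ 2 * he
  have hsplit : (t : ℂ) * u - 1 = ((t : ℂ) * (1 - e) - 1) - t * (1 - e - u) := by ring
  have hnorm : ‖(t : ℂ) * (1 - e - u)‖ ≤ |t| * (r * x) := by
    rw [norm_mul, norm_real, Real.norm_eq_abs]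
    exact mul_le_mul_of_nonneg_left hu (abs_nonneg t)
  rcases lt_trichotomy t 0 with ht0 | ht0 | ht0
  · have hce_gt : r * (1 - x * t) < ‖(t : ℂ) * (1 - e) - 1‖ :=
      lt_of_pow_lt_pow_left₀ 2 (norm_nonneg _) (by nlinarith)
    have hgt : r < ‖(t : ℂ) * u - 1‖ := by
      have := norm_sub_norm_le ((t : ℂ) * (1 - e) - 1) (t * (1 - e - u))
      rw [← hsplit] at this
      rw [abs_of_neg ht0] at hnorm
      nlinarith
    nlinarith [pow_lt_pow_left₀ hgt hr.le two_ne_zero]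
  · have hr1 : r = 1 := by nlinarith
    subst hr1
    have hre : (1 - e).re - u.re ≤ x := by
      simpa using (re_le_norm (1 - e - u)).trans hu
    simp only [quartic, one_pow] at hq
    simp only [sub_re, one_re] at hre
    nlinarith
  · have hce_lt : ‖(t : ℂ) * (1 - e) - 1‖ < r * (1 - x * t) :=
      lt_of_pow_lt_pow_left₀ 2 (by nlinarith [hxt (by linarith)]) (by nlinarith)
    have hlt : ‖(t : ℂ) * u - 1‖ < r := by
      have := norm_sub_le ((t : ℂ) * (1 - e) - 1) (t * (1 - e - u))
      rw [← hsplit] at this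
      rw [abs_of_pos ht0] at hnorm
      nlinarith
    nlinarith [pow_lt_pow_left₀ hlt (norm_nonneg _) two_ne_zero]

lemma norm_one_sub_one_div_conj_lt {r : ℝ} {u : ℂ} (h : ‖1 - u‖ < r * ‖u‖) :
    ‖1 - 1 / conj u‖ < r := by
  have hu : u ≠ 0 := by rintro rfl; norm_num at h
  have hconj : 1 - 1 / conj u = conj ((u - 1) / u) := by
    rw [map_div₀, map_sub, map_one]
    field_simp [(map_ne_zero _).2 hu]
  rwa [hconj, norm_conj, norm_div, norm_sub_rev, div_lt_iff₀ (norm_pos_iff.2 hu)]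

section PowerFlow

variable {n : ℕ} (Z : Matrix (Fin n) (Fin n) ℂ) (S σ : Fin n → ℂ)

lemma xiI_nonneg (i : Fin n) : 0 ≤ xiI Z S i :=
  Finset.sum_nonneg fun _ _ => norm_nonneg _

lemma xiI_le_xiMax (i : Fin n) : xiI Z S i ≤ xiMax Z S :=
  le_ciSup (Set.finite_range _).bddAbove i

lemma norm_etaI_le_etaMax (i : Fin n) : ‖etaI Z σ i‖ ≤ etaMax Z σ :=
  le_ciSup (f := fun i => ‖etaI Z σ i‖) (Set.finite_range _).bddAbove i

lemma gammaI_le_gammaMax (i : Fin n) : gammaI Z S σ i ≤ gammaMax Z S σ :=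
  le_ciSup (Set.finite_range _).bddAbove i

lemma closure_Dset_subset (r : ℝ) :
    closure (Dset Z S σ r) ⊆ {u | ∀ i, ‖1 - etaI Z σ i - u i‖ ≤ r * xiI Z S i} := by
  refine closure_minimal (fun u hu i => ?_) ?_
  · rcases (xiI_nonneg Z S i).lt_or_eq with h | h
    · exact ((hu i).1 h).le
    · simp [(hu i).2 h.symm, ← h]
  · simp only [Set.ofPred_forall]
    exact isClosed_iInter fun i => isClosed_le (by fun_prop) continuous_const

lemma pfMap_apply_of_xiI_eq_zero (u : Fin n → ℂ) {i : Fin n} (h : xiI Z S i = 0) :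
    pfMap Z S σ u i = 1 - etaI Z σ i := by
  have hterm (j : Fin n) : Z i j * S j = 0 :=
    norm_eq_zero.1 ((Finset.sum_eq_zero_iff_of_nonneg fun _ _ => norm_nonneg _).1 h j
      (Finset.mem_univ j))
  have hsum : ∑ j, Z i j * (1 - 1 / conj (u j)) * conj (S j) = 0 :=
    Finset.sum_eq_zero fun j _ => by
      rcases mul_eq_zero.1 (hterm j) with h' | h' <;> simp [h']
  simp only [pfMap, etaI, hsum, add_zero]

variable {Z S σ}

lemma norm_one_sub_etaI_sub_pfMap_lt {u : Fin n → ℂ} {r : ℝ}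
    (hq : ∀ j, ‖1 - 1 / conj (u j)‖ < r) {i : Fin n} (hi : 0 < xiI Z S i) :
    ‖1 - etaI Z σ i - pfMap Z S σ u i‖ < r * xiI Z S i := by
  obtain ⟨j₀, -, hj₀⟩ := Finset.exists_ne_zero_of_sum_ne_zero hi.ne'
  calc ‖1 - etaI Z σ i - pfMap Z S σ u i‖
      = ‖∑ j, Z i j * (1 - 1 / conj (u j)) * conj (S j)‖ := by
        rw [← norm_neg]; congr 1; simp only [pfMap, etaI]; ring
    _ ≤ ∑ j, ‖Z i j * S j‖ * ‖1 - 1 / conj (u j)‖ :=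
        (norm_sum_le _ _).trans_eq <| Finset.sum_congr rfl fun j _ => by
          simp only [norm_mul, norm_conj]; ring
    _ < ∑ j, ‖Z i j * S j‖ * r :=
        Finset.sum_lt_sum (fun j _ => by gcongr; exact (hq j).le)
          ⟨j₀, Finset.mem_univ _, by gcongr; exact hq j₀⟩
    _ = r * xiI Z S i := by rw [xiI, Finset.mul_sum]; simp only [mul_comm]

lemma pfMap_mem_Dset {u : Fin n → ℂ} {r : ℝ} (hq : ∀ j, ‖1 - 1 / conj (u j)‖ < r) :
    pfMap Z S σ u ∈ Dset Z S σ r := fun _ =>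
  ⟨norm_one_sub_etaI_sub_pfMap_lt hq, pfMap_apply_of_xiI_eq_zero Z S σ u⟩

lemma quartic_neg_of_rLow_lt_of_lt_rHigh {r : ℝ} (hξ : 0 < xiMax Z S)
    (hlow : rLow Z S σ < r) (hhigh : r < rHigh Z S σ) :
    quartic (xiMax Z S) (etaMax Z σ) (gammaMax Z S σ) r < 0 := by
  have hr : 0 < r := (Real.sqrt_nonneg _).trans_lt hlow
  rw [rLow, Real.sqrt_lt' hr] at hlow
  rw [rHigh, Real.lt_sqrt hr.le] at hhigh
  have := quadratic_neg_between_roots (pow_pos hξ 2) hlow hhigh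
  rw [quartic]
  linarith [show r ^ 4 = (r ^ 2) ^ 2 by ring]

lemma norm_one_sub_lt_of_mem_closure_Dset {r : ℝ} {u : Fin n → ℂ} (hr : 0 < r)
    (hξη : xiMax Z S - etaMax Z σ ≤ 1)
    (hq : quartic (xiMax Z S) (etaMax Z σ) (gammaMax Z S σ) r < 0)
    (hu : u ∈ closure (Dset Z S σ r)) (j : Fin n) : ‖1 - u j‖ < r * ‖u j‖ := by
  have hξ := xiI_le_xiMax Z S j
  have hη := norm_etaI_le_etaMax Z σ j
  have hγ := gammaI_le_gammaMax Z S σ j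
  have hx := xiI_nonneg Z S j
  have hre := neg_le_of_abs_le (abs_re_le_norm (etaI Z σ j))
  unfold gammaI at hγ
  refine norm_one_sub_lt_of_norm_sub_le hr
    (lt_of_le_of_lt (quartic_mono hx hξ (norm_nonneg _) hη hγ) hq) (fun hr1 => ?_)
    (closure_Dset_subset Z S σ r hu j)
  refine mul_one_sub_sq_lt_one hr hr1 hx hξ hξη ?_ hq
  nlinarith [norm_nonneg (etaI Z σ j)]

lemma eq_of_mem_closure_Dset {r : ℝ} {u : Fin n → ℂ} (hξ : xiMax Z S = 0)
    (hu : u ∈ closure (Dset Z S σ r)) (i : Fin n) : u i = 1 - etaI Z σ i := by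
  have h := closure_Dset_subset Z S σ r hu i
  rw [le_antisymm (hξ ▸ xiI_le_xiMax Z S i) (xiI_nonneg Z S i), mul_zero, norm_le_zero_iff,
    sub_eq_zero] at h
  exact h.symm

lemma one_sub_etaI_ne_zero (hξ : xiMax Z S = 0) (hγ : gammaMax Z S σ < 1) (i : Fin n) :
    1 - etaI Z σ i ≠ 0 := by
  intro h
  have hγi := gammaI_le_gammaMax Z S σ i
  rw [gammaI, le_antisymm (hξ ▸ xiI_le_xiMax Z S i) (xiI_nonneg Z S i),
    ← sub_eq_zero.1 h] at hγi
  norm_num at hγi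
  linarith

end PowerFlow

theorem pf_map_invariant_polydisc_general {n : ℕ}
    (Z : Matrix (Fin n) (Fin n) ℂ)
    (σ S : Fin n → ℂ)
    (hc1 : gammaMax Z S σ + 2 * xiMax Z S * etaMax Z σ < 1)
    (hc2 : xiMax Z S - etaMax Z σ ≤ 1) :
    (0 < xiMax Z S → ∀ r : ℝ, rLow Z S σ < r → r < rHigh Z S σ →
      ∀ u ∈ closure (Dset Z S σ r), (∀ i, u i ≠ 0) ∧ pfMap Z S σ u ∈ Dset Z S σ r) ∧
    (xiMax Z S = 0 → ∀ r : ℝ, 0 < r →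
      ∀ u ∈ closure (Dset Z S σ r), (∀ i, u i ≠ 0) ∧ pfMap Z S σ u ∈ Dset Z S σ r) := by
  refine ⟨fun hξ r hlow hhigh u hu => ?_, fun hξ r _ u hu => ?_⟩
  · have hr : 0 < r := (Real.sqrt_nonneg _).trans_lt hlow
    have hu' := norm_one_sub_lt_of_mem_closure_Dset hr hc2
      (quartic_neg_of_rLow_lt_of_lt_rHigh hξ hlow hhigh) hu
    exact ⟨fun j hj => absurd (hu' j) (by simp [hj]),
      pfMap_mem_Dset fun j => norm_one_sub_one_div_conj_lt (hu' j)⟩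
  · refine ⟨fun i => eq_of_mem_closure_Dset hξ hu i ▸ one_sub_etaI_ne_zero hξ ?_ i,
      fun i => ⟨fun hi => ?_, pfMap_apply_of_xiI_eq_zero Z S σ u⟩⟩
    · simpa [hξ] using hc1
    · exact (lt_irrefl 0 (hi.trans_le (hξ ▸ xiI_le_xiMax Z S i))).elim

/-- under conditions (C), if `ξ(S) > 0` then for every `r̲ < r < r̄` the map `F`
sends the closure of `D(r)` into `D(r)` (and every point of the closure has nonzero
components); if `ξ(S) = 0` the same holds for every `r > 0`. -/
theorem pf_map_invariant_polydisc {n : ℕ} (hn : 1 ≤ n)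
    (Z : Matrix (Fin n) (Fin n) ℂ) (hZ : IsUnit Z.det)
    (S0 σ S : Fin n → ℂ) (hS : S = S0 + σ)
    (hc1 : gammaMax Z S σ + 2 * xiMax Z S * etaMax Z σ < 1)
    (hc2 : xiMax Z S - etaMax Z σ ≤ 1) :
    (0 < xiMax Z S → ∀ r : ℝ, rLow Z S σ < r → r < rHigh Z S σ →
      ∀ u ∈ closure (Dset Z S σ r), (∀ i, u i ≠ 0) ∧ pfMap Z S σ u ∈ Dset Z S σ r) ∧
    (xiMax Z S = 0 → ∀ r : ℝ, 0 < r →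
      ∀ u ∈ closure (Dset Z S σ r), (∀ i, u i ≠ 0) ∧ pfMap Z S σ u ∈ Dset Z S σ r) :=
  pf_map_invariant_polydisc_general Z σ S hc1 hc2
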